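/- Let ℓ : ℝ^d → ℝ be convex and G-Lipschitz and let r > 0. Then ℓ is differentiable Lebesgue-almost everywhere, and for any measurable function g : ℝ^d → ℝ^d that agrees with the gradient ∇ℓ at every point where ℓ is differentiable, the r-smoothing ℓ̂ is differentiable with ∇ℓ̂(θ) = ∫ g(θ + y) dμ_r(y) for every θ ∈ ℝ^d. -/

import Mathlib

open MeasureTheory

/-- The uniform probability measure on the closed Euclidean ball of radius `r`
centered at the origin in `ℝ^d`. -/
noncomputable def uniformBall (d : ℕ) (r : ℝ) : Measure (EuclideanSpace ℝ (Fin d)) :=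
  (volume (Metric.closedBall (0 : EuclideanSpace ℝ (Fin d)) r))⁻¹ •
    volume.restrict (Metric.closedBall (0 : EuclideanSpace ℝ (Fin d)) r)

/-- The `r`-smoothing of `ℓ`: the average of `ℓ` over the ball of radius `r` around the point. -/
noncomputable def smoothed {d : ℕ} (ℓ : EuclideanSpace ℝ (Fin d) → ℝ) (r : ℝ)
    (θ : EuclideanSpace ℝ (Fin d)) : ℝ :=
  ∫ y, ℓ (θ + y) ∂(uniformBall d r)

/-! By Rademacher's theorem a Lipschitz `ℓ` is differentiable Lebesgue-a.e.; as Lebesgue measure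
is translation invariant and `μ_r` is absolutely continuous with respect to it, `ℓ` is
differentiable at `θ + y` for `μ_r`-a.e. `y`. The difference quotients of `ℓ (· + y)` are
bounded by the Lipschitz constant, so differentiation under the integral sign (dominated
convergence) gives `∇ℓ̂(θ) = ∫ ∇ℓ(θ + y) dμ_r(y)`, and `g` agrees with `∇ℓ` at `θ + y` for
`μ_r`-a.e. `y`. -/

open Filter Metric Set

theorem LipschitzWith.comp_add_right {E F : Type*} [SeminormedAddCommGroup E]
    [PseudoEMetricSpace F] {f : E → F} {C : NNReal} (hf : LipschitzWith C f) (a : E) :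
    LipschitzWith C (fun x ↦ f (x + a)) := by
  simpa [Function.comp_def] using hf.comp (IsometryEquiv.addRight a).isometry.lipschitz

section LipschitzSmoothing

variable {E F : Type*} [NormedAddCommGroup E] [NormedSpace ℝ E] [FiniteDimensional ℝ E]
  [MeasurableSpace E] [BorelSpace E] [NormedAddCommGroup F] [NormedSpace ℝ F]
  [FiniteDimensional ℝ F] {ν μ : Measure E} [ν.IsAddHaarMeasure] {f : E → F} {C : NNReal}

theorem LipschitzWith.ae_differentiableAt_add (hf : LipschitzWith C f) (hμ : μ ≪ ν) (θ : E) :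
    ∀ᵐ y ∂μ, DifferentiableAt ℝ f (θ + y) :=
  hμ.ae_le ((measurePreserving_add_left ν θ).quasiMeasurePreserving.ae
    (hf.ae_differentiableAt (μ := ν)))

theorem LipschitzWith.hasFDerivAt_integral_comp_add [IsFiniteMeasure μ] (hf : LipschitzWith C f)
    (hμ : μ ≪ ν) {θ : E} (hfθ : Integrable (fun y ↦ f (θ + y)) μ) :
    HasFDerivAt (fun x ↦ ∫ y, f (x + y) ∂μ) (∫ y, fderiv ℝ f (θ + y) ∂μ) θ := by
  refine (hasFDerivAt_integral_of_dominated_loc_of_lip (bound := fun _ ↦ (C : ℝ)) univ_mem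
    (Eventually.of_forall fun x ↦ ?_) hfθ ?_ ?_ (integrable_const _) ?_).2
  · exact (hf.continuous.comp (continuous_const_add x)).aestronglyMeasurable
  · exact ((measurable_fderiv ℝ f).comp (measurable_const_add θ)).aestronglyMeasurable
  · refine Eventually.of_forall fun y ↦ ?_
    simpa using (hf.comp_add_right y).lipschitzOnWith (s := univ)
  · filter_upwards [hf.ae_differentiableAt_add hμ θ] with y hy
    exact (hasFDerivAt_comp_add_right y).2 hy.hasFDerivAt

end LipschitzSmoothing

section Gradient

open InnerProductSpace

variable {E : Type*} [NormedAddCommGroup E] [InnerProductSpace ℝ E] [FiniteDimensional ℝ E]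
  [MeasurableSpace E] [BorelSpace E] {ν μ : Measure E} [ν.IsAddHaarMeasure] {f : E → ℝ}
  {C : NNReal}

theorem LipschitzWith.hasGradientAt_integral_comp_add [IsFiniteMeasure μ] (hf : LipschitzWith C f)
    (hμ : μ ≪ ν) {θ : E} (hfθ : Integrable (fun y ↦ f (θ + y)) μ) :
    HasGradientAt (fun x ↦ ∫ y, f (x + y) ∂μ) (∫ y, gradient f (θ + y) ∂μ) θ := by
  have h : ∫ y, fderiv ℝ f (θ + y) ∂μ = toDual ℝ E (∫ y, gradient f (θ + y) ∂μ) :=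
    calc ∫ y, fderiv ℝ f (θ + y) ∂μ = ∫ y, toDual ℝ E (gradient f (θ + y)) ∂μ := by
          simp [gradient]
      _ = _ := (toDual ℝ E).toLinearIsometry.integral_comp_comm _
  rw [hasGradientAt_iff_hasFDerivAt, ← h]
  exact hf.hasFDerivAt_integral_comp_add hμ hfθ

end Gradient

section UniformBall

variable {d : ℕ} {r : ℝ}

instance isFiniteMeasure_uniformBall : IsFiniteMeasure (uniformBall d r) where
  measure_univ_lt_top := by
    simpa [uniformBall] using ENNReal.inv_mul_le_one _ |>.trans_lt ENNReal.one_lt_top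

theorem uniformBall_absolutelyContinuous : uniformBall d r ≪ volume :=
  Measure.smul_absolutelyContinuous.trans Measure.restrict_le_self.absolutelyContinuous

theorem uniformBall_restrict_closedBall :
    (uniformBall d r).restrict (closedBall 0 r) = uniformBall d r := by
  simp [uniformBall, Measure.restrict_smul, Measure.restrict_restrict_of_subset subset_rfl]

theorem Continuous.integrable_uniformBall {f : EuclideanSpace ℝ (Fin d) → ℝ}
    (hf : Continuous f) : Integrable f (uniformBall d r) := by
  rw [← uniformBall_restrict_closedBall]
  exact hf.continuousOn.integrableOn_compact (isCompact_closedBall 0 r)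

end UniformBall

theorem stmt10_general {d : ℕ} (ℓ : EuclideanSpace ℝ (Fin d) → ℝ) (G : ℝ)
    (hlip : ∀ u v, |ℓ u - ℓ v| ≤ G * ‖u - v‖)
    (r : ℝ) :
    (∀ᵐ θ ∂(volume : Measure (EuclideanSpace ℝ (Fin d))), DifferentiableAt ℝ ℓ θ) ∧
    ∀ g : EuclideanSpace ℝ (Fin d) → EuclideanSpace ℝ (Fin d), Measurable g →
      (∀ θ, DifferentiableAt ℝ ℓ θ → g θ = gradient ℓ θ) →
      ∀ θ, DifferentiableAt ℝ (smoothed ℓ r) θ ∧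
        gradient (smoothed ℓ r) θ = ∫ y, g (θ + y) ∂(uniformBall d r) := by
  have hL : LipschitzWith (Real.toNNReal G) ℓ :=
    .of_dist_le' fun u v ↦ by simpa [Real.dist_eq, dist_eq_norm] using hlip u v
  refine ⟨hL.ae_differentiableAt, fun g _ hg_eq θ ↦ ?_⟩
  have hgrad :
      HasGradientAt (smoothed ℓ r) (∫ y, gradient ℓ (θ + y) ∂(uniformBall d r)) θ :=
    hL.hasGradientAt_integral_comp_add uniformBall_absolutelyContinuous
      (hL.continuous.comp (continuous_const_add θ)).integrable_uniformBall
  have hg : ∫ y, g (θ + y) ∂(uniformBall d r) = ∫ y, gradient ℓ (θ + y) ∂(uniformBall d r) :=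
    integral_congr_ae <| (hL.ae_differentiableAt_add uniformBall_absolutelyContinuous θ).mono
      fun _ ↦ hg_eq _
  exact ⟨hgrad.differentiableAt, hg ▸ hgrad.gradient⟩

theorem stmt10 {d : ℕ} (ℓ : EuclideanSpace ℝ (Fin d) → ℝ) (G : ℝ) (hG : 0 ≤ G)
    (hconv : ConvexOn ℝ Set.univ ℓ)
    (hlip : ∀ u v, |ℓ u - ℓ v| ≤ G * ‖u - v‖)
    (r : ℝ) (hr : 0 < r) :
    (∀ᵐ θ ∂(volume : Measure (EuclideanSpace ℝ (Fin d))), DifferentiableAt ℝ ℓ θ) ∧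
    ∀ g : EuclideanSpace ℝ (Fin d) → EuclideanSpace ℝ (Fin d), Measurable g →
      (∀ θ, DifferentiableAt ℝ ℓ θ → g θ = gradient ℓ θ) →
      ∀ θ, DifferentiableAt ℝ (smoothed ℓ r) θ ∧
        gradient (smoothed ℓ r) θ = ∫ y, g (θ + y) ∂(uniformBall d r) :=
  stmt10_general ℓ G hlip r
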